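/- With δ : [0,1]^ℕ → [0,1] as the limit δ((x_n)) = lim_n ρ_n(x_0,…,x_n) of the recursively defined ρ_n: for every x ∈ [0,1], δ(max(x − 1/2^0, 0), max(x − 1/2^1, 0), max(x − 1/2^2, 0), …) = x. -/

import Mathlib

open Set

noncomputable def pmax : ℕ → (ℕ → ℝ) → ℝ
  | 0, x => x 0
  | n + 1, x => max (pmax n x) (x (n + 1))

noncomputable def rho : ℕ → (ℕ → ℝ) → ℝ
  | 0, x => x 0
  | n + 1, x => min (pmax (n + 1) x) (min (rho n x + (1 / 2) ^ n) 1)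

/-- `δ((x_n)) = lim_n ρ_n(x_0,…,x_n)`, realized as the supremum of the increasing
bounded sequence `(ρ_n x)_n`. -/
noncomputable def delta (x : ℕ → ℝ) : ℝ := ⨆ n, rho n x

open Filter Topology

/-! On a sequence that increases by at most `1/2^n` at step `n` and stays below `1`, every
truncation `ρ_n` returns its last entry, so `δ` is the limit of the sequence itself. The
sequence `max (x - 1/2^n) 0` is of this kind and tends to `x`. -/

theorem pmax_eq_of_monotone {x : ℕ → ℝ} (hx : Monotone x) (n : ℕ) : pmax n x = x n := by
  induction n with
  | zero => rfl
  | succ n ih => rw [pmax, ih, max_eq_right (hx n.le_succ)]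

theorem rho_eq_of_monotone {x : ℕ → ℝ} (hx : Monotone x)
    (hstep : ∀ n, x (n + 1) ≤ x n + (1 / 2) ^ n) (hle : ∀ n, x n ≤ 1) (n : ℕ) :
    rho n x = x n := by
  induction n with
  | zero => rfl
  | succ n ih =>
    rw [rho, ih, pmax_eq_of_monotone hx, min_eq_left (le_min (hstep n) (hle _))]

theorem delta_eq_of_tendsto {x : ℕ → ℝ} {a : ℝ} (hx : Monotone x)
    (hstep : ∀ n, x (n + 1) ≤ x n + (1 / 2) ^ n) (hle : ∀ n, x n ≤ 1)
    (hlim : Tendsto x atTop (𝓝 a)) : delta x = a := by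
  have hrho : (fun n => rho n x) = x := funext (rho_eq_of_monotone hx hstep hle)
  rw [delta, hrho]
  exact (isLUB_of_tendsto_atTop hx hlim).ciSup_eq

theorem monotone_truncated_sub (x : ℝ) : Monotone fun n : ℕ => max (x - (1 / 2) ^ n) 0 := by
  intro m n hmn
  have : ((1 : ℝ) / 2) ^ n ≤ (1 / 2) ^ m := pow_le_pow_of_le_one (by norm_num) (by norm_num) hmn
  exact max_le_max (by linarith) le_rfl

theorem truncated_sub_succ_le (x : ℝ) (n : ℕ) :
    max (x - (1 / 2) ^ (n + 1)) 0 ≤ max (x - (1 / 2) ^ n) 0 + (1 / 2) ^ n := by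
  have hpos : (0 : ℝ) < (1 / 2) ^ (n + 1) := by positivity
  have hsub := le_max_left (x - (1 / 2) ^ n) 0
  have hzero := le_max_right (x - (1 / 2) ^ n) 0
  exact max_le (by linarith) (by linarith [pow_pos (by norm_num : (0 : ℝ) < 1 / 2) n])

theorem truncated_sub_le_one {x : ℝ} (hx : x ≤ 1) (n : ℕ) : max (x - (1 / 2) ^ n) 0 ≤ 1 :=
  max_le (by linarith [pow_pos (by norm_num : (0 : ℝ) < 1 / 2) n]) zero_le_one

theorem tendsto_truncated_sub {x : ℝ} (hx : 0 ≤ x) :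
    Tendsto (fun n : ℕ => max (x - (1 / 2) ^ n) 0) atTop (𝓝 x) := by
  have hpow : Tendsto (fun n : ℕ => ((1 : ℝ) / 2) ^ n) atTop (𝓝 0) :=
    tendsto_pow_atTop_nhds_zero_of_lt_one (by norm_num) (by norm_num)
  simpa [max_eq_left hx] using (hpow.const_sub x).max (tendsto_const_nhds (x := (0 : ℝ)))

theorem delta_truncated_sub (x : ℝ) (hx : x ∈ Icc (0:ℝ) 1) :
    delta (fun n => max (x - (1 / 2) ^ n) 0) = x :=
  delta_eq_of_tendsto (monotone_truncated_sub x) (truncated_sub_succ_le x)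
    (truncated_sub_le_one hx.2) (tendsto_truncated_sub hx.1)
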